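/- arXiv:1803.04280 — 3 statements merged into one kernel-verified Lean document; each statement's English description precedes it below -/
import Mathlib

section
/- Let q ≥ 2 be an integer. Then for every integer a ≥ 1, u_q(aq − 1) = q·u_q(a−1) + q·(a−1)·a/2. -/
/-- `vq q n` is the `q`-adic valuation: `0` if `n = 0`, and otherwise the
largest `k` such that `q ^ k` divides `n`. -/
noncomputable def vq (q n : ℕ) : ℕ := if n = 0 then 0 else sSup {k : ℕ | q ^ k ∣ n}

/-- `wq q n = ∑_{i=0}^n vq q i`. -/
noncomputable def wq (q n : ℕ) : ℕ := ∑ i ∈ Finset.range (n + 1), vq q i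

/-- `uq q n = ∑_{i=0}^n wq q i`. -/
noncomputable def uq (q n : ℕ) : ℕ := ∑ i ∈ Finset.range (n + 1), wq q i

/-! `v_q` vanishes on `q*m+1, …, q*m+q-1` and `v_q(q*(m+1)) = v_q(m+1) + 1`, so
`w_q(q*m + r) = w_q(m) + m` for every `r < q`. Summing over blocks of length `q` gives
`∑_{n < aq} w_q(n) = q * ∑_{m < a} (w_q(m) + m)`, and `∑_{m < a} m` is Gauss's sum. -/

open Finset

theorem vq_eq_padicValNat {q : ℕ} (hq : q ≠ 1) (n : ℕ) : vq q n = padicValNat q n := by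
  rcases eq_or_ne n 0 with rfl | hn
  · simp [vq]
  · rw [vq, if_neg hn]
    exact IsGreatest.csSup_eq
      ⟨pow_padicValNat_dvd, fun _ hk => (Nat.pow_dvd_iff_le_padicValNat hq hn).1 hk⟩

theorem wq_succ (q n : ℕ) : wq q (n + 1) = wq q n + vq q (n + 1) :=
  sum_range_succ _ _

theorem wq_mul_add_of_lt {q : ℕ} (hq : 1 < q) (m : ℕ) {r : ℕ} (hr : r < q) :
    wq q (q * m + r) = wq q (q * m) := by
  induction r with
  | zero => rfl
  | succ r ih =>
    have hv : vq q (q * m + r + 1) = 0 := by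
      rw [vq_eq_padicValNat hq.ne']
      exact padicValNat_eq_zero_of_mem_Ioo (k := m) ⟨by omega, by rw [mul_add]; omega⟩
    rw [← add_assoc, wq_succ, hv, add_zero, ih (by omega)]

theorem wq_mul {q : ℕ} (hq : 1 < q) (m : ℕ) : wq q (q * m) = wq q m + m := by
  induction m with
  | zero => simp [wq, vq]
  | succ m ih =>
    have hvq : vq q (q * (m + 1)) = vq q (m + 1) + 1 := by
      simp only [vq_eq_padicValNat hq.ne', padicValNat_base_mul hq m.succ_ne_zero]
    have hsplit : q * (m + 1) = q * m + (q - 1) + 1 := by rw [mul_add]; omega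
    rw [hsplit, wq_succ, ← hsplit, wq_mul_add_of_lt hq m (by omega), ih, hvq, wq_succ]
    ring

theorem sum_range_mul_wq {q : ℕ} (hq : 1 < q) (a : ℕ) :
    ∑ n ∈ range (q * a), wq q n = q * ∑ m ∈ range a, (wq q m + m) := by
  induction a with
  | zero => simp
  | succ a ih =>
    have hblock : ∑ r ∈ range q, wq q (q * a + r) = q * (wq q a + a) := by
      rw [sum_congr rfl fun r hr => (wq_mul_add_of_lt hq a (mem_range.1 hr)).trans (wq_mul hq a),
        sum_const, card_range, smul_eq_mul]
    rw [mul_add_one, sum_range_add, ih, hblock, sum_range_succ, mul_add q _ (wq q a + a)]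

theorem uq_sub_one (q : ℕ) {n : ℕ} (hn : n ≠ 0) : uq q (n - 1) = ∑ i ∈ range n, wq q i := by
  rw [uq, Nat.sub_add_cancel (Nat.one_le_iff_ne_zero.2 hn)]

theorem stmt_1 (q : ℕ) (hq : 2 ≤ q) (a : ℕ) (ha : 1 ≤ a) :
    uq q (a * q - 1) = q * uq q (a - 1) + q * ((a - 1) * a / 2) := by
  have ha₀ : a ≠ 0 := Nat.one_le_iff_ne_zero.1 ha
  rw [uq_sub_one q (Nat.mul_ne_zero ha₀ (by omega)), uq_sub_one q ha₀, mul_comm a q,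
    sum_range_mul_wq hq, sum_add_distrib, sum_range_id, mul_add, mul_comm (a - 1) a]
end

section
/- Let M be an n×n complex matrix such that every eigenvalue λ of M satisfies |λ| = 1 and λ ≠ 1. If v ∈ ℂ^n is a vector such that the sequence (M^k v)_{k∈ℕ} converges as k → ∞, then v = 0. -/
/-!
The limit `L` of `M ^ k v` is fixed by `M`, and `1` is not an eigenvalue, so `L = 0`.
The vectors whose orbit tends to `0` form an `M`-invariant subspace; if it were nonzero it
would contain an eigenvector, whose eigenvalue `μ` then satisfies `μ ^ k → 0`, i.e. `‖μ‖ < 1`.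
-/

open Filter Topology

namespace Module.End

section Attracting

variable {R E : Type*} [Semiring R] [AddCommMonoid E] [Module R E] [TopologicalSpace E]
  [ContinuousAdd E] [ContinuousConstSMul R E]

def attractingSubmodule (f : End R E) : Submodule R E where
  carrier := {x | Tendsto (fun k : ℕ => (f ^ k) x) atTop (𝓝 0)}
  zero_mem' := by simpa using tendsto_const_nhds
  add_mem' hx hy := by simpa using hx.add hy
  smul_mem' c _ hx := by simpa using hx.const_smul c

theorem mem_attractingSubmodule {f : End R E} {x : E} :
    x ∈ f.attractingSubmodule ↔ Tendsto (fun k : ℕ => (f ^ k) x) atTop (𝓝 0) :=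
  Iff.rfl

theorem mapsTo_attractingSubmodule (f : End R E) :
    Set.MapsTo f f.attractingSubmodule f.attractingSubmodule := fun x hx => by
  simpa [mem_attractingSubmodule, ← mul_apply, ← pow_succ] using
    (tendsto_add_atTop_iff_nat 1).2 hx

end Attracting

theorem hasEigenvalue_one_of_tendsto_pow_apply {R E : Type*} [CommRing R] [AddCommGroup E]
    [Module R E] [TopologicalSpace E] [T2Space E] {f : End R E} (hf : Continuous f) {v L : E}
    (hL : Tendsto (fun k : ℕ => (f ^ k) v) atTop (𝓝 L)) (hL0 : L ≠ 0) : f.HasEigenvalue 1 := by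
  have hfix : f L = L :=
    isFixedPt_of_tendsto_iterate (by simpa [pow_apply] using hL) hf.continuousAt
  exact hasEigenvalue_of_hasEigenvector ⟨by simpa [mem_eigenspace_iff] using hfix, hL0⟩

variable {𝕜 E : Type*} [NormedField 𝕜] [NormedAddCommGroup E] [NormedSpace 𝕜 E]

theorem HasEigenvector.norm_lt_one_of_tendsto_pow_apply {f : End 𝕜 E} {μ : 𝕜} {u : E}
    (hu : f.HasEigenvector μ u) (h : Tendsto (fun k : ℕ => (f ^ k) u) atTop (𝓝 0)) : ‖μ‖ < 1 := by
  have hu0 : ‖u‖ ≠ 0 := norm_ne_zero_iff.2 hu.2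
  have hnorm : Tendsto (fun k : ℕ => ‖μ‖ ^ k * ‖u‖) atTop (𝓝 0) := by
    simpa [hu.pow_apply, norm_smul] using h.norm
  have := hnorm.div_const ‖u‖
  simp only [mul_div_cancel_right₀ _ hu0, zero_div] at this
  simpa using tendsto_pow_atTop_nhds_zero_iff.1 this

theorem exists_hasEigenvalue_norm_lt_one_of_tendsto_pow_apply [IsAlgClosed 𝕜]
    [FiniteDimensional 𝕜 E] {f : End 𝕜 E} {v : E}
    (hv : Tendsto (fun k : ℕ => (f ^ k) v) atTop (𝓝 0)) (hv0 : v ≠ 0) :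
    ∃ μ, f.HasEigenvalue μ ∧ ‖μ‖ < 1 := by
  have : Nontrivial f.attractingSubmodule := ⟨⟨⟨v, hv⟩, 0, by simpa [Subtype.ext_iff] using hv0⟩⟩
  obtain ⟨μ, hμ⟩ := exists_eigenvalue (f.restrict f.mapsTo_attractingSubmodule)
  obtain ⟨u, hu⟩ := hμ.exists_hasEigenvector
  have hu' : f.HasEigenvector μ u :=
    ⟨mem_eigenspace_iff.2 (congrArg Subtype.val hu.apply_eq_smul), by simpa using hu.2⟩
  exact ⟨μ, hasEigenvalue_of_hasEigenvector hu', hu'.norm_lt_one_of_tendsto_pow_apply u.2⟩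

end Module.End

open Module.End

theorem stmt_4 {n : ℕ} (M : Matrix (Fin n) (Fin n) ℂ)
    (hM : ∀ μ ∈ spectrum ℂ M, ‖μ‖ = 1 ∧ μ ≠ 1)
    (v : Fin n → ℂ)
    (hv : ∃ L : Fin n → ℂ,
      Filter.Tendsto (fun k : ℕ => (M ^ k).mulVec v) Filter.atTop (nhds L)) :
    v = 0 := by
  obtain ⟨L, hL⟩ := hv
  set f : Module.End ℂ (Fin n → ℂ) := Matrix.toLin' M
  have hspec : ∀ μ : ℂ, f.HasEigenvalue μ → ‖μ‖ = 1 ∧ μ ≠ 1 := fun μ hμ =>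
    hM μ (by rwa [← Matrix.spectrum_toLin', ← hasEigenvalue_iff_mem_spectrum])
  have horbit : Tendsto (fun k : ℕ => (f ^ k) v) atTop (𝓝 L) := by
    simpa [f, ← Matrix.toLin'_pow] using hL
  obtain rfl : L = 0 := by
    by_contra hL0
    exact (hspec 1 (hasEigenvalue_one_of_tendsto_pow_apply
      f.continuous_of_finiteDimensional horbit hL0)).2 rfl
  by_contra hv0
  obtain ⟨μ, hμ, hlt⟩ := exists_hasEigenvalue_norm_lt_one_of_tendsto_pow_apply horbit hv0
  exact hlt.ne (hspec μ hμ).1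
end

section
/- Let q be an integer and for λ ∈ ℤ let N_λ be the 3×3 integer matrix with rows (1, 1, 0), (0, q, λ), (0, 0, 1). Then for every k ≥ 1, all integers λ_1, …, λ_k, and all integers ψ, θ, x, the row vector (ψ, θ, x)·N_{λ_1}·N_{λ_2}⋯N_{λ_k} equals (ψ, q^k·θ + (Σ_{i=0}^{k−1} q^i)·ψ, x + Σ_{j=1}^{k} λ_j·(q^{j−1}·θ + (Σ_{i=0}^{j−2} q^i)·ψ)), where the inner sum Σ_{i=0}^{j−2} q^i is 0 when j = 1. -/
/-!
Right multiplication by `N_λ` fixes `ψ`, sends `θ` to `ψ + q θ` whatever `λ` is, and adds `λ θ`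
to `x`. So the middle coordinate runs through the iterates of the affine map `θ ↦ ψ + q θ`,
whose `j`-th iterate is `q ^ j θ + (1 + q + ⋯ + q ^ (j - 1)) ψ`, and the last coordinate
collects `λ_j` times the `(j - 1)`-st iterate.
-/

/-- The 3×3 integer matrix with rows `(1, 1, 0)`, `(0, q, λ)`, `(0, 0, 1)`. -/
def Nmat (q lam : ℤ) : Matrix (Fin 3) (Fin 3) ℤ :=
  !![1, 1, 0; 0, q, lam; 0, 0, 1]

def affineIterate {R : Type*} [CommRing R] (q ψ θ : R) (n : ℕ) : R :=
  q ^ n * θ + (∑ i ∈ Finset.range n, q ^ i) * ψ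

section affineIterate

variable {R : Type*} [CommRing R] (q ψ θ : R)

@[simp]
theorem affineIterate_zero : affineIterate q ψ θ 0 = θ := by
  simp [affineIterate]

theorem affineIterate_succ (n : ℕ) :
    affineIterate q ψ θ (n + 1) = affineIterate q ψ (ψ + q * θ) n := by
  simp only [affineIterate, Finset.sum_range_succ]
  ring

end affineIterate

theorem vecMul_Nmat (q lam ψ θ x : ℤ) :
    Matrix.vecMul ![ψ, θ, x] (Nmat q lam) = ![ψ, ψ + q * θ, x + lam * θ] := by
  ext i
  fin_cases i <;> simp [Nmat, Matrix.vecMul, dotProduct, Fin.sum_univ_three] <;> ring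

theorem vecMul_prod_Nmat (q : ℤ) (k : ℕ) (lam : Fin k → ℤ) (ψ θ x : ℤ) :
    Matrix.vecMul ![ψ, θ, x] (List.ofFn fun j : Fin k => Nmat q (lam j)).prod =
      ![ψ, affineIterate q ψ θ k, x + ∑ j : Fin k, lam j * affineIterate q ψ θ j] := by
  induction k generalizing θ x with
  | zero => simp
  | succ n ih =>
    rw [List.ofFn_succ, List.prod_cons, ← Matrix.vecMul_vecMul, vecMul_Nmat, ih,
      Fin.sum_univ_succ]
    simp only [Fin.val_zero, Fin.val_succ, affineIterate_zero,
      affineIterate_succ, add_assoc]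

theorem stmt_16_general (q : ℤ) (k : ℕ) (lam : Fin k → ℤ) (ψ θ x : ℤ) :
    Matrix.vecMul ![ψ, θ, x] (List.ofFn fun j : Fin k => Nmat q (lam j)).prod =
      ![ψ,
        q ^ k * θ + (∑ i ∈ Finset.range k, q ^ i) * ψ,
        x + ∑ j : Fin k,
          lam j * (q ^ (j : ℕ) * θ + (∑ i ∈ Finset.range (j : ℕ), q ^ i) * ψ)] :=
  vecMul_prod_Nmat q k lam ψ θ x

theorem stmt_16 (q : ℤ) (k : ℕ) (hk : 1 ≤ k) (lam : Fin k → ℤ) (ψ θ x : ℤ) :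
    Matrix.vecMul ![ψ, θ, x] (List.ofFn fun j : Fin k => Nmat q (lam j)).prod =
      ![ψ,
        q ^ k * θ + (∑ i ∈ Finset.range k, q ^ i) * ψ,
        x + ∑ j : Fin k,
          lam j * (q ^ (j : ℕ) * θ + (∑ i ∈ Finset.range (j : ℕ), q ^ i) * ψ)] :=
  stmt_16_general q k lam ψ θ x
end
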